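/- (Description of the norm group in the unramified case, used in Lemme 1) Let p be an odd prime and let u ∈ ℤ_p be a unit whose residue in ZMod p (via the reduction map ℤ_p → ZMod p) is not a square. Then for every nonzero z ∈ ℚ_p, there exist x, y ∈ ℚ_p with x² − u·y² = z if and only if the normalized p-adic valuation of z is even. -/

import Mathlib

/-!
Since `ū` is not a square, `t² − u` is a `p`-adic unit for every `t ∈ ℤ_p`. Writing
`x² − u y² = y² ((x/y)² − u)` when `‖x‖ ≤ ‖y‖`, and letting `x²` dominate otherwise, gives
`‖x² − u y²‖ = max ‖x‖ ‖y‖ ^ 2`, so every nonzero value of the form has even valuation.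
Conversely, over the finite field `ZMod p` every element is of the form `a² − ū b²`, and since `p`
is odd Hensel's lemma lifts such a representation of the residue of a unit `c` to one of `c`;
multiplying by `p^(2n)` then reaches every element of valuation `2n`.
-/
open PadicInt Polynomial IsLocalRing

theorem HenselianRing.isSquare_of_isSquare_residue {R : Type*} [CommRing R] [IsLocalRing R]
    [HenselianRing R (maximalIdeal R)] (h2 : IsUnit (2 : R)) {c : R} (hc : IsUnit c)
    (hsq : IsSquare (residue R c)) : IsSquare c := by
  obtain ⟨r, hr⟩ := hsq
  obtain ⟨a₀, rfl⟩ := residue_surjective r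
  have ha₀ : IsUnit a₀ := by
    rw [← residue_ne_zero_iff_isUnit]
    rintro h
    exact (residue_ne_zero_iff_isUnit c).mpr hc (by rw [hr, h, mul_zero])
  obtain ⟨a, ha, -⟩ := HenselianRing.is_henselian (X ^ 2 - C c)
    (monic_X_pow_sub_C c two_ne_zero) a₀
    (by rw [← residue_eq_zero_iff]; simp [hr, sq])
    (by simpa [← two_mul] using (h2.mul ha₀).map (Ideal.Quotient.mk (maximalIdeal R)))
  exact ⟨a, by simpa [sub_eq_zero, sq, eq_comm] using ha⟩

namespace PadicInt
variable {p : ℕ} [Fact p.Prime]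

theorem toZMod_ne_zero_iff_isUnit {x : ℤ_[p]} : toZMod x ≠ 0 ↔ IsUnit x := by
  rw [toZMod_eq_residueField_comp_residue]
  simp

theorem isUnit_of_not_isSquare_toZMod {u : ℤ_[p]} (hu : ¬IsSquare (toZMod u)) : IsUnit u :=
  toZMod_ne_zero_iff_isUnit.mp fun h => hu (h ▸ IsSquare.zero)

theorem isSquare_of_isSquare_toZMod (hp : p ≠ 2) {c : ℤ_[p]} (hc : IsUnit c)
    (hsq : IsSquare (toZMod c)) : IsSquare c := by
  refine HenselianRing.isSquare_of_isSquare_residue ?_ hc ?_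
  · rw [← toZMod_ne_zero_iff_isUnit, map_ofNat]
    exact Ring.two_ne_zero (by rwa [ZMod.ringChar_zmod_n])
  · simpa [toZMod_eq_residueField_comp_residue] using hsq.map residueField.symm.toRingHom

theorem exists_sq_sub_mul_sq_eq (hp : p ≠ 2) {u c : ℤ_[p]} (hu : IsUnit u) (hc : IsUnit c) :
    ∃ a b : ℤ_[p], a ^ 2 - u * b ^ 2 = c := by
  have hodd : Fintype.card (ZMod p) % 2 = 1 := by
    rw [ZMod.card]
    exact Nat.odd_iff.mp ((Fact.out : p.Prime).odd_of_ne_two hp)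
  obtain ⟨a₀, b₀, hab₀⟩ := FiniteField.exists_root_sum_quadratic
    (f := X ^ 2 - C (toZMod c)) (g := -C (toZMod u) * X ^ 2)
    (by compute_degree!) (by compute_degree!; exact toZMod_ne_zero_iff_isUnit.mpr hu) hodd
  simp only [eval_sub, eval_mul, eval_neg, eval_pow, eval_X, eval_C] at hab₀
  obtain ⟨a, rfl⟩ := ZMod.ringHom_surjective toZMod a₀
  rcases eq_or_ne b₀ 0 with rfl | hb₀
  · obtain ⟨r, hr⟩ := isSquare_of_isSquare_toZMod hp hc ⟨toZMod a, by linear_combination -hab₀⟩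
    exact ⟨r, 0, by simp [hr, sq]⟩
  · -- keep `a` and take for `b` a square root of `u⁻¹ (a² − c)`, whose residue is `b₀²`
    obtain ⟨v, rfl⟩ := hu
    have hv : toZMod (↑v⁻¹ : ℤ_[p]) * toZMod (v : ℤ_[p]) = 1 := by
      rw [← map_mul, Units.inv_mul, map_one]
    have hd : toZMod (((v⁻¹ : ℤ_[p]ˣ) : ℤ_[p]) * (a ^ 2 - c)) = b₀ * b₀ := by
      rw [map_mul, map_sub, map_pow]
      linear_combination (toZMod (↑v⁻¹ : ℤ_[p])) * hab₀ + b₀ ^ 2 * hv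
    obtain ⟨b, hb⟩ := isSquare_of_isSquare_toZMod hp
      (toZMod_ne_zero_iff_isUnit.mp (by rw [hd]; exact mul_ne_zero hb₀ hb₀)) ⟨b₀, hd⟩
    exact ⟨a, b, by rw [sq b, ← hb, Units.mul_inv_cancel_left, sub_sub_cancel]⟩

end PadicInt

namespace Padic
variable {p : ℕ} [Fact p.Prime]

theorem norm_sq_sub_mul_sq {u : ℤ_[p]} (hu : ¬IsSquare (toZMod u)) (x y : ℚ_[p]) :
    ‖x ^ 2 - u * y ^ 2‖ = max ‖x‖ ‖y‖ ^ 2 := by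
  have hu₁ : ‖(u : ℚ_[p])‖ = 1 := isUnit_iff.mp (isUnit_of_not_isSquare_toZMod hu)
  rcases lt_or_ge ‖y‖ ‖x‖ with hyx | hxy
  · have hlt : ‖u * y ^ 2‖ < ‖x ^ 2‖ := by
      simpa [hu₁] using pow_lt_pow_left₀ hyx (norm_nonneg _) two_ne_zero
    rw [sub_eq_add_neg, add_eq_max_of_ne (by simpa using hlt.ne'), norm_neg,
      max_eq_left hlt.le, max_eq_left hyx.le, norm_pow]
  · rcases eq_or_ne y 0 with rfl | hy
    · simp_all
    · let t : ℤ_[p] := ⟨x / y, by rw [norm_div]; exact div_le_one_of_le₀ hxy (norm_nonneg _)⟩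
      have ht : IsUnit (t ^ 2 - u) := toZMod_ne_zero_iff_isUnit.mp <| by
        rw [map_sub, map_pow, sub_ne_zero]
        rintro h
        exact hu ⟨_, h ▸ sq _⟩
      have hfactor : x ^ 2 - u * y ^ 2 = y ^ 2 * ((t ^ 2 - u : ℤ_[p]) : ℚ_[p]) := by
        rw [PadicInt.coe_sub, PadicInt.coe_pow, show (t : ℚ_[p]) = x / y from rfl]
        field_simp
      rw [hfactor, norm_mul, padic_norm_e_of_padicInt, isUnit_iff.mp ht, max_eq_right hxy,
        norm_pow, mul_one]

theorem valuation_eq_of_norm_eq {x y : ℚ_[p]} (h : ‖x‖ = ‖y‖) : x.valuation = y.valuation := by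
  rcases eq_or_ne x 0 with rfl | hx
  · simp [norm_eq_zero.mp (h.symm.trans norm_zero)]
  have hy : y ≠ 0 := norm_ne_zero_iff.mp (h ▸ norm_ne_zero_iff.mpr hx)
  have hp : (1 : ℝ) < p := mod_cast (Fact.out : p.Prime).one_lt
  rw [norm_eq_zpow_neg_valuation hx, norm_eq_zpow_neg_valuation hy] at h
  exact neg_inj.mp (zpow_right_injective₀ (by positivity) hp.ne' h)

theorem even_valuation_of_norm_eq_sq {z w : ℚ_[p]} (h : ‖z‖ = ‖w‖ ^ 2) : Even z.valuation := by
  rw [valuation_eq_of_norm_eq (y := w ^ 2) (by rw [h, norm_pow]), valuation_pow]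
  exact ⟨w.valuation, by push_cast; ring⟩

theorem norm_mul_p_zpow_neg_valuation {z : ℚ_[p]} (hz : z ≠ 0) :
    ‖z * (p : ℚ_[p]) ^ (-z.valuation)‖ = 1 := by
  have hp : (p : ℝ) ≠ 0 := mod_cast (Fact.out : p.Prime).ne_zero
  rw [norm_mul, norm_eq_zpow_neg_valuation hz, norm_p_zpow, neg_neg, ← zpow_add₀ hp,
    neg_add_cancel, zpow_zero]

end Padic

theorem norm_iff_even_valuation_unramified_general (p : ℕ) [Fact p.Prime] (hp : p ≠ 2)
    (u : ℤ_[p]) (hns : ¬ IsSquare (PadicInt.toZMod u))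
    (z : ℚ_[p]) (hz : z ≠ 0) :
    (∃ x y : ℚ_[p], x ^ 2 - u * y ^ 2 = z) ↔ Even z.valuation := by
  constructor
  · rintro ⟨x, y, rfl⟩
    rcases max_choice ‖x‖ ‖y‖ with h | h <;>
      exact Padic.even_valuation_of_norm_eq_sq
        ((Padic.norm_sq_sub_mul_sq hns x y).trans (by rw [h]))
  · rintro ⟨n, hn⟩
    have hunit := Padic.norm_mul_p_zpow_neg_valuation hz
    obtain ⟨a, b, hab⟩ := exists_sq_sub_mul_sq_eq hp (isUnit_of_not_isSquare_toZMod hns)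
      (mkUnits hunit).isUnit
    replace hab := congrArg ((↑) : ℤ_[p] → ℚ_[p]) hab
    push_cast at hab
    have hp₀ : (p : ℚ_[p]) ≠ 0 := mod_cast (Fact.out : p.Prime).ne_zero
    refine ⟨p ^ n * a, p ^ n * b, ?_⟩
    calc ((p : ℚ_[p]) ^ n * a) ^ 2 - u * (p ^ n * b) ^ 2
        = p ^ (n + n) * ((a : ℚ_[p]) ^ 2 - u * b ^ 2) := by rw [zpow_add₀ hp₀]; ring
      _ = z := by
        rw [hab, mkUnits_eq, ← hn, mul_left_comm, ← zpow_add₀ hp₀, add_neg_cancel, zpow_zero,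
          mul_one]

/-- (Norm group in the unramified case, used in Lemme 1) If `u` is a unit of `ℤ_p`
(p odd) whose residue in `ZMod p` is a non-square, then a nonzero `z ∈ ℚ_p` is of the
form `x² − u·y²` if and only if its normalized valuation is even. -/
theorem norm_iff_even_valuation_unramified (p : ℕ) [Fact p.Prime] (hp : p ≠ 2)
    (u : ℤ_[p]) (hu : IsUnit u) (hns : ¬ IsSquare (PadicInt.toZMod u))
    (z : ℚ_[p]) (hz : z ≠ 0) :
    (∃ x y : ℚ_[p], x ^ 2 - u * y ^ 2 = z) ↔ Even z.valuation :=
  norm_iff_even_valuation_unramified_general p hp u hns z hz
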